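/- Let G be a DAG with leaf set X satisfying the path-cluster-comparability property (PCC). Then G has the k-lca-property if and only if 𝒞_G is pre-k-ary. -/

import Mathlib

namespace Dag

variable {V : Type*}

/-- Reachability order of a digraph: `v ⪯ w` iff there is a directed path from `w` to `v`. -/
def reach (adj : V → V → Prop) (v w : V) : Prop :=
  Relation.ReflTransGen (fun a b => adj b a) v w

/-- The digraph is acyclic: its reachability relation is antisymmetric. -/
def acyclic (adj : V → V → Prop) : Prop :=
  ∀ v w, reach adj v w → reach adj w v → v = w

/-- A leaf is a `⪯`-minimal vertex. -/
def leaf (adj : V → V → Prop) (x : V) : Prop :=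
  ∀ v, reach adj v x → v = x

/-- The set of leaves of the digraph. -/
def leaves (adj : V → V → Prop) : Set V := {x | leaf adj x}

/-- The cluster of `v`: all leaves that are descendants of `v`. -/
def cluster (adj : V → V → Prop) (v : V) : Set V :=
  {x | leaf adj x ∧ reach adj x v}

/-- The clustering system of the digraph. -/
def clusters (adj : V → V → Prop) : Set (Set V) := {C | ∃ v, C = cluster adj v}

/-- `w` is a least common ancestor of `A`: a `⪯`-minimal common ancestor of `A`. -/
def isLCA (adj : V → V → Prop) (A : Set V) (w : V) : Prop :=
  (∀ a ∈ A, reach adj a w) ∧ ∀ u, (∀ a ∈ A, reach adj a u) → reach adj u w → u = w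

/-- `A` has a unique least common ancestor. -/
def hasUniqueLCA (adj : V → V → Prop) (A : Set V) : Prop := ∃! w, isLCA adj A w

end Dag

/-!
An lca of `A` exists below every common ancestor by finiteness and acyclicity. If the lca `w`
of `A` is unique, then every common ancestor `v` lies above it, so `𝒞(w)` is the intersection of
the clusters containing `A`. Conversely, if that intersection is a cluster `𝒞(w)`, then (PCC)
forces every lca `u` of `A` to be comparable with the common ancestor `w`, whence `𝒞(u) = 𝒞(w)`;
two lcas with equal clusters are comparable by (PCC) again, hence equal by minimality.
-/

namespace Dag

variable {V : Type*} {adj : V → V → Prop}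

lemma cluster_mono {u v : V} (h : reach adj u v) : cluster adj u ⊆ cluster adj v :=
  fun _ hx => ⟨hx.1, hx.2.trans h⟩

lemma wellFounded_reach_and_ne [Finite V] (hacy : acyclic adj) :
    WellFounded (fun a b => reach adj a b ∧ a ≠ b) := by
  have : IsTrans V (fun a b => reach adj a b ∧ a ≠ b) :=
    ⟨fun a b c hab hbc => ⟨hab.1.trans hbc.1, fun hac => hbc.2 (hacy _ _ hbc.1 (hac ▸ hab.1))⟩⟩
  have : Std.Irrefl (fun a b : V => reach adj a b ∧ a ≠ b) := ⟨fun _ h => h.2 rfl⟩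
  exact Finite.wellFounded_of_trans_of_irrefl _

lemma exists_isLCA_reach [Finite V] (hacy : acyclic adj) {A : Set V} {v : V}
    (hv : ∀ a ∈ A, reach adj a v) : ∃ m, isLCA adj A m ∧ reach adj m v := by
  obtain ⟨m, ⟨hmA, hmv⟩, hmin⟩ := (wellFounded_reach_and_ne hacy).has_min
    {u | (∀ a ∈ A, reach adj a u) ∧ reach adj u v} ⟨v, hv, .refl⟩
  refine ⟨m, ⟨hmA, fun u hu hum => ?_⟩, hmv⟩
  by_contra hne
  exact hmin u ⟨hu, hum.trans hmv⟩ ⟨hum, hne⟩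

lemma isLCA.eq_of_reach {A : Set V} {u v : V} (hu : isLCA adj A u) (hv : isLCA adj A v)
    (h : reach adj u v) : u = v :=
  hv.2 u hu.1 h

lemma isLCA.eq_of_cluster_subset
    (hpcc : ∀ u v, cluster adj u ⊆ cluster adj v → reach adj u v ∨ reach adj v u)
    {A : Set V} {u v : V} (hu : isLCA adj A u) (hv : isLCA adj A v)
    (h : cluster adj u ⊆ cluster adj v) : u = v :=
  (hpcc u v h).elim (isLCA.eq_of_reach hu hv) fun hvu => (isLCA.eq_of_reach hv hu hvu).symm

lemma isLCA.cluster_eq_of_cluster_subset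
    (hpcc : ∀ u v, cluster adj u ⊆ cluster adj v → reach adj u v ∨ reach adj v u)
    {A : Set V} {u w : V} (hu : isLCA adj A u) (hw : ∀ a ∈ A, reach adj a w)
    (hwu : cluster adj w ⊆ cluster adj u) : cluster adj u = cluster adj w := by
  rcases hpcc w u hwu with hwu' | huw
  · rw [hu.2 w hw hwu']
  · exact subset_antisymm (cluster_mono huw) hwu

lemma subset_sInter_clusters (U : Set V) : U ⊆ ⋂₀ {C | C ∈ clusters adj ∧ U ⊆ C} :=
  Set.subset_sInter fun _ hC => hC.2

lemma sInter_clusters_subset_cluster {U : Set V} (hU : U ⊆ leaves adj) {v : V}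
    (hv : ∀ a ∈ U, reach adj a v) : ⋂₀ {C | C ∈ clusters adj ∧ U ⊆ C} ⊆ cluster adj v :=
  Set.sInter_subset_of_mem ⟨⟨v, rfl⟩, fun a ha => ⟨hU ha, hv a ha⟩⟩

lemma sInter_clusters_eq_cluster_of_isLCA_unique [Finite V] (hacy : acyclic adj)
    {U : Set V} (hU : U ⊆ leaves adj) {w : V} (hw : isLCA adj U w)
    (huniq : ∀ m, isLCA adj U m → m = w) :
    ⋂₀ {C | C ∈ clusters adj ∧ U ⊆ C} = cluster adj w := by
  refine subset_antisymm (sInter_clusters_subset_cluster hU hw.1) (Set.subset_sInter ?_)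
  rintro _ ⟨⟨v, rfl⟩, hUv⟩
  obtain ⟨m, hm, hmv⟩ := exists_isLCA_reach hacy fun a ha => (hUv ha).2
  exact huniq m hm ▸ cluster_mono hmv

lemma hasUniqueLCA_of_sInter_clusters_mem [Finite V] (hacy : acyclic adj)
    (hpcc : ∀ u v, cluster adj u ⊆ cluster adj v → reach adj u v ∨ reach adj v u)
    {A : Set V} (hA : A ⊆ leaves adj) (h : ⋂₀ {C | C ∈ clusters adj ∧ A ⊆ C} ∈ clusters adj) :
    hasUniqueLCA adj A := by
  obtain ⟨w, hw⟩ := h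
  have hwA : ∀ a ∈ A, reach adj a w := fun a ha => (hw ▸ subset_sInter_clusters A ha).2
  have cluster_eq : ∀ u, isLCA adj A u → cluster adj u = cluster adj w := fun u hu =>
    isLCA.cluster_eq_of_cluster_subset hpcc hu hwA (hw ▸ sInter_clusters_subset_cluster hA hu.1)
  obtain ⟨m, hm, -⟩ := exists_isLCA_reach hacy hwA
  exact ⟨m, hm, fun u hu =>
    isLCA.eq_of_cluster_subset hpcc hu hm ((cluster_eq u hu).trans (cluster_eq m hm).symm).subset⟩

end Dag

/-- For a DAG satisfying (PCC), the `k`-lca-property holds iff the clustering system is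
pre-`k`-ary. -/
theorem stmt10 {V : Type*} [Fintype V] (k : ℕ) (adj : V → V → Prop) (hacy : Dag.acyclic adj)
    (hpcc : ∀ u v : V, (Dag.reach adj u v ∨ Dag.reach adj v u) ↔
      (Dag.cluster adj u ⊆ Dag.cluster adj v ∨ Dag.cluster adj v ⊆ Dag.cluster adj u)) :
    (∀ A : Set V, A ⊆ Dag.leaves adj → A.Nonempty → A.ncard ≤ k →
        Dag.hasUniqueLCA adj A) ↔
      (∀ U : Set V, U ⊆ Dag.leaves adj → U.Nonempty → U.ncard ≤ k →
        (⋂₀ {C | C ∈ Dag.clusters adj ∧ U ⊆ C}) ∈ Dag.clusters adj) := by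
  have hcomp : ∀ u v, Dag.cluster adj u ⊆ Dag.cluster adj v →
      Dag.reach adj u v ∨ Dag.reach adj v u := fun u v h => (hpcc u v).2 (Or.inl h)
  refine forall₄_congr fun A hA _ _ => ⟨fun ⟨w, hw, huniq⟩ => ?_, ?_⟩
  · exact ⟨w, Dag.sInter_clusters_eq_cluster_of_isLCA_unique hacy hA hw huniq⟩
  · exact Dag.hasUniqueLCA_of_sInter_clusters_mem hacy hcomp hA
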